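/- The 1D Lax–Friedrichs scheme with the standard viscosity parameter is not positivity-preserving for any CFL number: with the ideal EOS of index γ = 1.4, for every constant C > 0 there exist states U_L, U_M, U_R ∈ 𝒢 whose first magnetic components coincide, such that, setting α = max{𝓡₁(U_L), 𝓡₁(U_M), 𝓡₁(U_R)} and using the LF numerical flux F̂₁ with viscosity α, the updated state Ū := U_M − (C/α)·( F̂₁(U_M, U_R) − F̂₁(U_L, U_M) ) (i.e. the LF update with time-step ratio α·Δt/Δx equal to C) does not belong to 𝒢. -/

import Mathlib

/-! The left state is light (`ρ = 1/100`) and carries the field `B = e₁`, so its fast speed is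
the Alfvén speed `|B₁|/√ρ = 10`; it dominates the other two states and fixes `α = 10`. All three
states are at rest in the normal direction and share the total and internal energies `E`, `d`.
With `α = 10` the transverse momentum and field of the update cancel exactly and its density and
energy are unchanged, while the jump `2` of the magnetic pressure between `U_L` and `U_R` gives it
the normal momentum `-C/10`. Its internal energy is therefore `d - C²/200`, negative for small
`d`. -/

open scoped BigOperators

noncomputable section

/-- Euclidean dot product on ℝ³. -/
def dot3 (a b : Fin 3 → ℝ) : ℝ := ∑ j, a j * b j

/-- Squared Euclidean norm on ℝ³. -/
def normSq3 (a : Fin 3 → ℝ) : ℝ := ∑ j, (a j) ^ 2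

/-- Momentum components of a state `U = (ρ, m, B, E) ∈ ℝ⁸`. -/
def mC (U : Fin 8 → ℝ) : Fin 3 → ℝ := ![U 1, U 2, U 3]

/-- Magnetic-field components of a state. -/
def BC (U : Fin 8 → ℝ) : Fin 3 → ℝ := ![U 4, U 5, U 6]

/-- Velocity components `v = m / ρ`. -/
def velC (U : Fin 8 → ℝ) : Fin 3 → ℝ := fun j => mC U j / U 0

/-- Internal energy `𝓔(U) = E − (|m|²/ρ + |B|²)/2`. -/
def intE (U : Fin 8 → ℝ) : ℝ := U 7 - (normSq3 (mC U) / U 0 + normSq3 (BC U)) / 2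

/-- The admissible set `𝒢`. -/
def admisSet : Set (Fin 8 → ℝ) := {U | 0 < U 0 ∧ 0 < intE U}

/-- The vector `n* = (|v*|²/2, −v*, −B*, 1) ∈ ℝ⁸`. -/
def nstar (vs Bs : Fin 3 → ℝ) : Fin 8 → ℝ :=
  ![normSq3 vs / 2, -vs 0, -vs 1, -vs 2, -Bs 0, -Bs 1, -Bs 2, 1]

/-- Euclidean dot product on ℝ⁸. -/
def dot8 (U V : Fin 8 → ℝ) : ℝ := ∑ k, U k * V k

/-- Flux `F_i(U)` of a state `U` with assigned pressure `p`, in direction `i`. -/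
def flux (p : ℝ) (i : Fin 3) (U : Fin 8 → ℝ) : Fin 8 → ℝ :=
  let ρ := U 0
  let v := velC U
  let B := BC U
  let ptot := p + normSq3 B / 2
  ![ρ * v i,
    ρ * v i * v 0 - B i * B 0 + (if i = 0 then ptot else 0),
    ρ * v i * v 1 - B i * B 1 + (if i = 1 then ptot else 0),
    ρ * v i * v 2 - B i * B 2 + (if i = 2 then ptot else 0),
    v i * B 0 - B i * v 0,
    v i * B 1 - B i * v 1,
    v i * B 2 - B i * v 2,
    v i * (U 7 + ptot) - B i * dot3 v B]

/-- The fast-speed-type quantity built from a sound-speed-like value `cs`: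
`(1/√2)·√( cs² + |B|²/ρ + √((cs² + |B|²/ρ)² − 4cs²B_i²/ρ) )`. -/
def fastLike (cs : ℝ) (U : Fin 8 → ℝ) (i : Fin 3) : ℝ :=
  (1 / Real.sqrt 2) *
    Real.sqrt (cs ^ 2 + normSq3 (BC U) / U 0 +
      Real.sqrt ((cs ^ 2 + normSq3 (BC U) / U 0) ^ 2 - 4 * cs ^ 2 * (BC U i) ^ 2 / U 0))

/-- `𝓢_s = p/(ρ√(2e))` for a state `U` with pressure `p`. -/
def sSound (p : ℝ) (U : Fin 8 → ℝ) : ℝ :=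
  p / (U 0 * Real.sqrt (2 * (intE U / U 0)))

/-- `𝓢_i` for a state `U` with pressure `p`. -/
def sFast (p : ℝ) (U : Fin 8 → ℝ) (i : Fin 3) : ℝ := fastLike (sSound p U) U i

/-- `f(U, Ũ; σ) = (|B̃ − B|/√2)·√(σ²/ρ + (1−σ)²/ρ̃)`. -/
def fCoup (U Ut : Fin 8 → ℝ) (σ : ℝ) : ℝ :=
  (Real.sqrt (normSq3 (fun j => BC Ut j - BC U j)) / Real.sqrt 2) *
    Real.sqrt (σ ^ 2 / U 0 + (1 - σ) ^ 2 / Ut 0)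

/-- `α_i(U, Ũ; σ)` for states `U, Ũ` with pressures `p, p̃`. -/
def alphaSig (i : Fin 3) (U Ut : Fin 8 → ℝ) (p pt : ℝ) (σ : ℝ) : ℝ :=
  max (max (|velC U i| + sFast p U i) (|velC Ut i| + sFast pt Ut i))
      (|σ * velC U i + (1 - σ) * velC Ut i| + max (sFast p U i) (sFast pt Ut i))
  + fCoup U Ut σ

/-- `α_i(U, Ũ) = inf_{σ ∈ ℝ} α_i(U, Ũ; σ)`. -/
def alphaInf (i : Fin 3) (U Ut : Fin 8 → ℝ) (p pt : ℝ) : ℝ :=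
  ⨅ σ : ℝ, alphaSig i U Ut p pt σ

/-- Ideal-EOS pressure `p = (γ−1)ρe = (γ−1)𝓔(U)`. -/
def idealP (γ : ℝ) (U : Fin 8 → ℝ) : ℝ := (γ - 1) * intE U

/-- Ideal-EOS sound speed `𝓒_s = √(γp/ρ)`. -/
def cSound (γ : ℝ) (U : Fin 8 → ℝ) : ℝ := Real.sqrt (γ * idealP γ U / U 0)

/-- Ideal-EOS fast speed `𝓒_i`. -/
def cFast (γ : ℝ) (U : Fin 8 → ℝ) (i : Fin 3) : ℝ := fastLike (cSound γ U) U i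

/-- Ideal-EOS spectral radius `𝓡_i(U) = |v_i| + 𝓒_i`. -/
def specR (γ : ℝ) (i : Fin 3) (U : Fin 8 → ℝ) : ℝ := |velC U i| + cFast γ U i

/-- Pressure of a state under a general EOS function `P(ρ, e)`. -/
def presOf (P : ℝ → ℝ → ℝ) (U : Fin 8 → ℝ) : ℝ := P (U 0) (intE U / U 0)

/-- Lax–Friedrichs numerical flux with viscosity `α`, under EOS function `P`. -/
def lfFlux (P : ℝ → ℝ → ℝ) (α : ℝ) (i : Fin 3) (Um Up : Fin 8 → ℝ) : Fin 8 → ℝ :=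
  (1 / 2 : ℝ) • (flux (presOf P Um) i Um + flux (presOf P Up) i Up - α • (Up - Um))

/-- Lax–Friedrichs numerical flux with viscosity `α`, ideal EOS of index `γ`. -/
def lfFluxIdeal (γ : ℝ) (α : ℝ) (i : Fin 3) (Um Up : Fin 8 → ℝ) : Fin 8 → ℝ :=
  (1 / 2 : ℝ) • (flux (idealP γ Um) i Um + flux (idealP γ Up) i Up - α • (Up - Um))

lemma normSq3_nonneg (a : Fin 3 → ℝ) : 0 ≤ normSq3 a :=
  Finset.sum_nonneg fun _ _ => sq_nonneg _

lemma intE_vec (ρ m₁ m₂ m₃ B₁ B₂ B₃ E : ℝ) :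
    intE ![ρ, m₁, m₂, m₃, B₁, B₂, B₃, E] =
      E - ((m₁ ^ 2 + m₂ ^ 2 + m₃ ^ 2) / ρ + (B₁ ^ 2 + B₂ ^ 2 + B₃ ^ 2)) / 2 := by
  simp [intE, normSq3, mC, BC, Fin.sum_univ_three]

lemma flux_zero_of_normal_momentum_zero (p ρ m₂ m₃ B₁ B₂ B₃ E : ℝ) :
    flux p 0 ![ρ, 0, m₂, m₃, B₁, B₂, B₃, E] =
      ![0, p + (B₂ ^ 2 + B₃ ^ 2 - B₁ ^ 2) / 2, -(B₁ * B₂), -(B₁ * B₃), 0,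
        -(B₁ * (m₂ / ρ)), -(B₁ * (m₃ / ρ)), -(B₁ * (m₂ / ρ * B₂ + m₃ / ρ * B₃))] := by
  funext k
  fin_cases k <;> simp [flux, velC, mC, BC, normSq3, dot3, Fin.sum_univ_three]
  ring

lemma fastLike_le_sqrt (c : ℝ) (U : Fin 8 → ℝ) (i : Fin 3) (hρ : 0 ≤ U 0) :
    fastLike c U i ≤ √(c ^ 2 + normSq3 (BC U) / U 0) := by
  set X := c ^ 2 + normSq3 (BC U) / U 0
  have hX : 0 ≤ X := add_nonneg (sq_nonneg c) (div_nonneg (normSq3_nonneg _) hρ)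
  have hdisc : √(X ^ 2 - 4 * c ^ 2 * BC U i ^ 2 / U 0) ≤ X := by
    refine Real.sqrt_le_iff.mpr ⟨hX, ?_⟩
    have : 0 ≤ 4 * c ^ 2 * BC U i ^ 2 / U 0 := by positivity
    linarith
  calc fastLike c U i ≤ 1 / √2 * √(2 * X) := by
        unfold fastLike
        gcongr
        linarith
    _ = √X := by
        rw [Real.sqrt_mul zero_le_two]
        field_simp

lemma fastLike_eq_sqrt_max (c : ℝ) (U : Fin 8 → ℝ) (i : Fin 3)
    (hB : normSq3 (BC U) = BC U i ^ 2) :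
    fastLike c U i = √(max (c ^ 2) (BC U i ^ 2 / U 0)) := by
  rw [fastLike, hB]
  have hdisc : (c ^ 2 + BC U i ^ 2 / U 0) ^ 2 - 4 * c ^ 2 * BC U i ^ 2 / U 0 =
      (c ^ 2 - BC U i ^ 2 / U 0) ^ 2 := by
    ring
  rw [hdisc, Real.sqrt_sq_eq_abs]
  generalize c ^ 2 = a, BC U i ^ 2 / U 0 = b
  have hmax : a + b + |a - b| = 2 * max a b := by
    rw [abs_sub_comm, ← two_nsmul_sup_eq_add_add_abs_sub, two_nsmul, two_mul]
  rw [hmax, Real.sqrt_mul zero_le_two]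
  field_simp

lemma cSound_sq (γ : ℝ) (U : Fin 8 → ℝ) (hγ : 1 ≤ γ) (hρ : 0 ≤ U 0) (hE : 0 ≤ intE U) :
    cSound γ U ^ 2 = γ * (γ - 1) * intE U / U 0 := by
  have hpos : 0 ≤ γ * idealP γ U / U 0 :=
    div_nonneg (mul_nonneg (by linarith) (mul_nonneg (by linarith) hE)) hρ
  rw [cSound, Real.sq_sqrt hpos, idealP, mul_assoc]

lemma specR_zero_of_normal_momentum_zero (γ : ℝ) (U : Fin 8 → ℝ) (hm : U 1 = 0) :
    specR γ 0 U = cFast γ U 0 := by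
  simp [specR, velC, mC, hm]

lemma specR_zero_le_of_normal_momentum_zero (γ : ℝ) (U : Fin 8 → ℝ) (hγ : 1 ≤ γ) (hm : U 1 = 0)
    (hρ : 0 ≤ U 0) (hE : 0 ≤ intE U) :
    specR γ 0 U ≤ √(γ * (γ - 1) * intE U / U 0 + normSq3 (BC U) / U 0) := by
  rw [specR_zero_of_normal_momentum_zero _ _ hm, cFast, ← cSound_sq γ U hγ hρ hE]
  exact fastLike_le_sqrt _ _ _ hρ

def leftState (d : ℝ) : Fin 8 → ℝ := ![1 / 100, 0, -1 / 5, 0, 1, 0, 0, d + 5 / 2]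

def midState (d : ℝ) : Fin 8 → ℝ := ![1, 0, 0, 0, 1, 2, 0, d + 5 / 2]

def rightState (d : ℝ) : Fin 8 → ℝ := ![199 / 100, 0, 0, 0, 1, 2, 0, d + 5 / 2]

section States

variable (d : ℝ)

lemma intE_leftState : intE (leftState d) = d := by
  rw [leftState, intE_vec]; norm_num

lemma intE_midState : intE (midState d) = d := by
  rw [midState, intE_vec]; norm_num

lemma intE_rightState : intE (rightState d) = d := by
  rw [rightState, intE_vec]; norm_num

variable {d}

lemma leftState_mem (hd : 0 < d) : leftState d ∈ admisSet :=
  ⟨by norm_num [leftState], by rwa [intE_leftState]⟩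

lemma midState_mem (hd : 0 < d) : midState d ∈ admisSet :=
  ⟨by norm_num [midState], by rwa [intE_midState]⟩

lemma rightState_mem (hd : 0 < d) : rightState d ∈ admisSet :=
  ⟨by norm_num [rightState], by rwa [intE_rightState]⟩

lemma specR_leftState (hd0 : 0 ≤ d) (hd1 : d ≤ 1) : specR 1.4 0 (leftState d) = 10 := by
  have hB : normSq3 (BC (leftState d)) = BC (leftState d) 0 ^ 2 := by
    simp [normSq3, BC, leftState, Fin.sum_univ_three]
  rw [specR_zero_of_normal_momentum_zero _ _ rfl, cFast, fastLike_eq_sqrt_max _ _ _ hB,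
    cSound_sq _ _ (by norm_num) (by norm_num [leftState]) (by rw [intE_leftState]; exact hd0),
    intE_leftState]
  have hmax : max (1.4 * (1.4 - 1) * d / leftState d 0) (BC (leftState d) 0 ^ 2 / leftState d 0)
      = 10 ^ 2 := by
    simp [leftState, BC]
    norm_num
    linarith
  rw [hmax, Real.sqrt_sq (by norm_num)]

lemma specR_midState_le (hd0 : 0 ≤ d) (hd1 : d ≤ 1) : specR 1.4 0 (midState d) ≤ 10 := by
  refine (specR_zero_le_of_normal_momentum_zero _ _ (by norm_num) rfl (by norm_num [midState])
    (by rw [intE_midState]; exact hd0)).trans (Real.sqrt_le_iff.mpr ⟨by norm_num, ?_⟩)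
  rw [intE_midState]
  simp [midState, normSq3, BC, Fin.sum_univ_three]
  norm_num
  linarith

lemma specR_rightState_le (hd0 : 0 ≤ d) (hd1 : d ≤ 1) : specR 1.4 0 (rightState d) ≤ 10 := by
  refine (specR_zero_le_of_normal_momentum_zero _ _ (by norm_num) rfl (by norm_num [rightState])
    (by rw [intE_rightState]; exact hd0)).trans (Real.sqrt_le_iff.mpr ⟨by norm_num, ?_⟩)
  rw [intE_rightState]
  simp [rightState, normSq3, BC, Fin.sum_univ_three]
  norm_num
  linarith

lemma max_specR_states (hd0 : 0 ≤ d) (hd1 : d ≤ 1) :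
    max (specR 1.4 0 (leftState d)) (max (specR 1.4 0 (midState d)) (specR 1.4 0 (rightState d)))
      = 10 := by
  rw [specR_leftState hd0 hd1]
  exact max_eq_left (max_le (specR_midState_le hd0 hd1) (specR_rightState_le hd0 hd1))

end States

lemma lf_update_states (d C : ℝ) :
    midState d - (C / 10) •
        (lfFluxIdeal 1.4 10 0 (midState d) (rightState d) -
          lfFluxIdeal 1.4 10 0 (leftState d) (midState d)) =
      ![1, -(C / 10), 0, 0, 1, 2, 0, d + 5 / 2] := by
  simp only [lfFluxIdeal, idealP, intE_leftState, intE_midState, intE_rightState]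
  simp only [leftState, midState, rightState, flux_zero_of_normal_momentum_zero]
  funext k
  fin_cases k <;> norm_num
  ring

lemma intE_lf_update (d C : ℝ) :
    intE ![1, -(C / 10), 0, 0, 1, 2, 0, d + 5 / 2] = d - C ^ 2 / 200 := by
  rw [intE_vec]; ring

/-- the 1D LF scheme with the standard viscosity parameter is
not positivity-preserving for any CFL number: with `γ = 1.4`, for every
`C > 0` there are `U_L, U_M, U_R ∈ 𝒢` with equal first magnetic components
such that, with `α = max{𝓡₁(U_L), 𝓡₁(U_M), 𝓡₁(U_R)}`, the LF update
`U_M − (C/α)(F̂₁(U_M,U_R) − F̂₁(U_L,U_M))` is not in `𝒢`. -/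
theorem lf_scheme_1D_not_PP (C : ℝ) (hC : 0 < C) :
    ∃ UL UM UR : Fin 8 → ℝ,
      UL ∈ admisSet ∧ UM ∈ admisSet ∧ UR ∈ admisSet ∧
      UL 4 = UM 4 ∧ UM 4 = UR 4 ∧
      (let γ : ℝ := 1.4
       let α : ℝ := max (specR γ 0 UL) (max (specR γ 0 UM) (specR γ 0 UR))
       UM - (C / α) • (lfFluxIdeal γ α 0 UM UR - lfFluxIdeal γ α 0 UL UM)
         ∉ admisSet) := by
  set d := min 1 (C ^ 2 / 400)
  have hd0 : 0 < d := lt_min one_pos (by positivity)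
  have hd1 : d ≤ 1 := min_le_left _ _
  have hdC : d < C ^ 2 / 200 := (min_le_right _ _).trans_lt (by linarith [pow_pos hC 2])
  refine ⟨leftState d, midState d, rightState d, leftState_mem hd0, midState_mem hd0,
    rightState_mem hd0, rfl, rfl, ?_⟩
  dsimp only
  rw [max_specR_states hd0.le hd1, lf_update_states]
  rintro ⟨-, hE⟩
  rw [intE_lf_update] at hE
  linarith
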